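/- Let F¹, F² : [0,1]² → ℝ³ be C¹ patches satisfying the AS-G¹ condition along their common interface with linear gluing functions α¹, α², β¹, β² (α¹α² > 0), and let φ : ℝ³ → ℝ be C¹. Then the pullbacks g¹ = φ∘F¹ and g² = φ∘F² satisfy (∂₁g¹(0,ξ) + β¹(ξ)·∂₂g¹(0,ξ))/α¹(ξ) = −(∂₂g²(ξ,0) + β²(ξ)·∂₁g²(ξ,0))/α²(ξ) for all ξ ∈ [0,1]. -/

import Mathlib

noncomputable def D1 (F : ℝ × ℝ → EuclideanSpace ℝ (Fin 3)) (x : ℝ × ℝ) :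
    EuclideanSpace ℝ (Fin 3) := fderiv ℝ F x (1, 0)

noncomputable def D2 (F : ℝ × ℝ → EuclideanSpace ℝ (Fin 3)) (x : ℝ × ℝ) :
    EuclideanSpace ℝ (Fin 3) := fderiv ℝ F x (0, 1)

noncomputable def sD1 (g : ℝ × ℝ → ℝ) (x : ℝ × ℝ) : ℝ := fderiv ℝ g x (1, 0)

noncomputable def sD2 (g : ℝ × ℝ → ℝ) (x : ℝ × ℝ) : ℝ := fderiv ℝ g x (0, 1)

section PartialDerivatives

variable {φ : EuclideanSpace ℝ (Fin 3) → ℝ} {F : ℝ × ℝ → EuclideanSpace ℝ (Fin 3)} {x : ℝ × ℝ}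

theorem sD1_comp (hφ : DifferentiableAt ℝ φ (F x)) (hF : DifferentiableAt ℝ F x) :
    sD1 (φ ∘ F) x = fderiv ℝ φ (F x) (D1 F x) := by
  rw [sD1, D1, fderiv_comp x hφ hF, ContinuousLinearMap.comp_apply]

theorem sD2_comp (hφ : DifferentiableAt ℝ φ (F x)) (hF : DifferentiableAt ℝ F x) :
    sD2 (φ ∘ F) x = fderiv ℝ φ (F x) (D2 F x) := by
  rw [sD2, D2, fderiv_comp x hφ hF, ContinuousLinearMap.comp_apply]

end PartialDerivatives

theorem pullback_satisfies_C1_coupling_general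
    (F₁ F₂ : ℝ × ℝ → EuclideanSpace ℝ (Fin 3))
    (hF₁ : ContDiff ℝ 1 F₁) (hF₂ : ContDiff ℝ 1 F₂)
    (hC0 : ∀ ξ ∈ Set.Icc (0 : ℝ) 1, F₁ (0, ξ) = F₂ (ξ, 0))
    (α₁ α₂ β₁ β₂ : ℝ → ℝ)
    (hASG1 : ∀ ξ ∈ Set.Icc (0 : ℝ) 1,
      (α₁ ξ)⁻¹ • (D1 F₁ (0, ξ) + β₁ ξ • D2 F₁ (0, ξ)) =
        -((α₂ ξ)⁻¹ • (D2 F₂ (ξ, 0) + β₂ ξ • D1 F₂ (ξ, 0))))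
    (φ : EuclideanSpace ℝ (Fin 3) → ℝ) (hφ : ContDiff ℝ 1 φ) :
    ∀ ξ ∈ Set.Icc (0 : ℝ) 1,
      (α₁ ξ)⁻¹ * (sD1 (φ ∘ F₁) (0, ξ) + β₁ ξ * sD2 (φ ∘ F₁) (0, ξ)) =
        -((α₂ ξ)⁻¹ * (sD2 (φ ∘ F₂) (ξ, 0) + β₂ ξ * sD1 (φ ∘ F₂) (ξ, 0))) := by
  intro ξ hξ
  have hdφ := hφ.differentiable one_ne_zero
  have hdF₁ := hF₁.differentiable one_ne_zero (0, ξ)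
  have hdF₂ := hF₂.differentiable one_ne_zero (ξ, 0)
  rw [sD1_comp (hdφ _) hdF₁, sD2_comp (hdφ _) hdF₁, sD1_comp (hdφ _) hdF₂,
    sD2_comp (hdφ _) hdF₂, ← hC0 ξ hξ]
  simpa only [map_neg, map_smul, map_add, smul_eq_mul] using
    congrArg (fderiv ℝ φ (F₁ (0, ξ))) (hASG1 ξ hξ)

/-- for AS-G¹ patches with linear gluing functions and any ambient `C¹`
function `φ`, the pullbacks `gⁱ = φ∘Fⁱ` satisfy the C¹-coupling condition across the
interface. -/
theorem pullback_satisfies_C1_coupling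
    (F₁ F₂ : ℝ × ℝ → EuclideanSpace ℝ (Fin 3))
    (hF₁ : ContDiff ℝ 1 F₁) (hF₂ : ContDiff ℝ 1 F₂)
    (hC0 : ∀ ξ ∈ Set.Icc (0 : ℝ) 1, F₁ (0, ξ) = F₂ (ξ, 0))
    (α₁ α₂ β₁ β₂ : ℝ → ℝ)
    (hα₁lin : ∃ a b : ℝ, ∀ ξ, α₁ ξ = a * (1 - ξ) + b * ξ)
    (hα₂lin : ∃ a b : ℝ, ∀ ξ, α₂ ξ = a * (1 - ξ) + b * ξ)
    (hβ₁lin : ∃ a b : ℝ, ∀ ξ, β₁ ξ = a * (1 - ξ) + b * ξ)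
    (hβ₂lin : ∃ a b : ℝ, ∀ ξ, β₂ ξ = a * (1 - ξ) + b * ξ)
    (hpos : ∀ ξ ∈ Set.Icc (0 : ℝ) 1, 0 < α₁ ξ * α₂ ξ)
    (hASG1 : ∀ ξ ∈ Set.Icc (0 : ℝ) 1,
      (α₁ ξ)⁻¹ • (D1 F₁ (0, ξ) + β₁ ξ • D2 F₁ (0, ξ)) =
        -((α₂ ξ)⁻¹ • (D2 F₂ (ξ, 0) + β₂ ξ • D1 F₂ (ξ, 0))))
    (φ : EuclideanSpace ℝ (Fin 3) → ℝ) (hφ : ContDiff ℝ 1 φ) :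
    ∀ ξ ∈ Set.Icc (0 : ℝ) 1,
      (α₁ ξ)⁻¹ * (sD1 (φ ∘ F₁) (0, ξ) + β₁ ξ * sD2 (φ ∘ F₁) (0, ξ)) =
        -((α₂ ξ)⁻¹ * (sD2 (φ ∘ F₂) (ξ, 0) + β₂ ξ * sD1 (φ ∘ F₂) (ξ, 0))) :=
  pullback_satisfies_C1_coupling_general F₁ F₂ hF₁ hF₂ hC0 α₁ α₂ β₁ β₂ hASG1 φ hφ
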